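/- arXiv:1511.00939 — 2 statements merged into one kernel-verified Lean document; each statement's English description precedes it below -/
import Mathlib

section
/- Let Λ be a nonempty finite set, let X ⊆ Λ^ℕ be a subshift, and let γ be a circuit relative to X. Then the following are equivalent: (i) for each n ∈ ℕ, the word γ^n (the n-fold concatenation of γ with itself) has an exit; (ii) there is a single infinite word z which is an exit for γ^n for all n ∈ ℕ (i.e., γ has a strong exit). -/
open scoped Classical

namespace SubshiftPaper

variable {Λ : Type}

/-- The left shift on infinite words. -/
def shiftMap (x : ℕ → Λ) : ℕ → Λ := fun n => x (n + 1)

/-- Concatenation of a finite word with an infinite word. -/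
def cat (α : List Λ) (y : ℕ → Λ) : ℕ → Λ := fun n => α.getD n (y (n - α.length))

/-- `α` is a prefix of the infinite word `x`. -/
def Pref (α : List Λ) (x : ℕ → Λ) : Prop := ∀ (i : ℕ) (h : i < α.length), x i = α[i]

/-- The tail of `x` after `n` letters. -/
def tail (x : ℕ → Λ) (n : ℕ) : ℕ → Λ := fun i => x (n + i)

/-- `α` occurs in `x` at position `n`. -/
def OccursAt (α : List Λ) (x : ℕ → Λ) (n : ℕ) : Prop :=
  ∀ (i : ℕ) (h : i < α.length), x (n + i) = α[i]

/-- `α` occurs in `x` (as a contiguous block of letters). -/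
def Occurs (α : List Λ) (x : ℕ → Λ) : Prop := ∃ n, OccursAt α x n

/-- `X` is a subshift: a nonempty closed shift-invariant subset. -/
def IsSubshift [TopologicalSpace Λ] (X : Set (ℕ → Λ)) : Prop :=
  X.Nonempty ∧ IsClosed X ∧ ∀ x ∈ X, shiftMap x ∈ X

/-- The set of infinite words avoiding all words in `F`. -/
def ForbidSpace (F : Set (List Λ)) : Set (ℕ → Λ) := {x | ∀ α ∈ F, ¬ Occurs α x}

/-- `X` is a subshift of finite type. -/
def IsSFT (X : Set (ℕ → Λ)) : Prop := ∃ F : Set (List Λ), F.Finite ∧ X = ForbidSpace F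

/-- The follower set of a finite word. -/
def follower (X : Set (ℕ → Λ)) (α : List Λ) : Set (ℕ → Λ) := {y | y ∈ X ∧ cat α y ∈ X}

/-- The cylinder of a finite word. -/
def cylinder (X : Set (ℕ → Λ)) (α : List Λ) : Set (ℕ → Λ) := {x | x ∈ X ∧ Pref α x}

/-- The language of `X`. -/
def Language (X : Set (ℕ → Λ)) : Set (List Λ) := {α | ∃ x ∈ X, Occurs α x}

/-- The embedding of finite words into the free group. -/
def wd (α : List Λ) : FreeGroup Λ := (α.map FreeGroup.of).prod

/-- Indicator function of a set of group elements. -/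
noncomputable def chi (s : Set (FreeGroup Λ)) : FreeGroup Λ → Bool :=
  fun g => if g ∈ s then true else false

/-- The set `ξ_x ⊆ 𝔽`. -/
def xiSet [DecidableEq Λ] (X : Set (ℕ → Λ)) (x : ℕ → Λ) : Set (FreeGroup Λ) :=
  {g | ∃ α β : List Λ, g = wd α * (wd β)⁻¹ ∧
        FreeGroup.norm g = α.length + β.length ∧
        Pref α x ∧ tail x α.length ∈ follower X α ∩ follower X β}

/-- `ξ_x` as an element of `2^𝔽`. -/
noncomputable def xiB [DecidableEq Λ] (X : Set (ℕ → Λ)) (x : ℕ → Λ) : FreeGroup Λ → Bool :=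
  chi (xiSet X x)

/-- The spectrum `Ω_X`: the closure of `{ξ_x : x ∈ X}` in `2^𝔽`. -/
noncomputable def Omega [DecidableEq Λ] (X : Set (ℕ → Λ)) : Set (FreeGroup Λ → Bool) :=
  closure ((fun x => xiB X x) '' X)

/-- Left translation of an element of `2^𝔽`. -/
def translate (g : FreeGroup Λ) (ξ : FreeGroup Λ → Bool) : FreeGroup Λ → Bool :=
  fun h => ξ (g⁻¹ * h)

/-- `x` is the stem of `ξ`: `ξ ∩ 𝔽₊` is exactly the set of prefixes of `x`. -/
def IsStem (ξ : FreeGroup Λ → Bool) (x : ℕ → Λ) : Prop :=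
  {g | ξ g = true} ∩ {g | ∃ α : List Λ, g = wd α} =
    {g | ∃ α : List Λ, g = wd α ∧ Pref α x}

/-- `x` is the stem of `ξ` at `g`: `ξ ∩ g𝔽₊ = {gα : α is a prefix of x}`. -/
def IsStemAt (ξ : FreeGroup Λ → Bool) (g : FreeGroup Λ) (x : ℕ → Λ) : Prop :=
  {h | ξ h = true} ∩ {h | ∃ α : List Λ, h = g * wd α} =
    {h | ∃ α : List Λ, h = g * wd α ∧ Pref α x}

/-- The orbit of `ξ` under the spectral partial action. -/
def Orbit (ξ : FreeGroup Λ → Bool) : Set (FreeGroup Λ → Bool) :=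
  {η | ∃ g : FreeGroup Λ, ξ g⁻¹ = true ∧ η = translate g ξ}

/-- Topological freeness of the spectral partial action. -/
noncomputable def TopFree [DecidableEq Λ] (X : Set (ℕ → Λ)) : Prop :=
  ∀ g : FreeGroup Λ, g ≠ 1 →
    ∀ U : Set (FreeGroup Λ → Bool), IsOpen U →
      (U ∩ Omega X ⊆ {ξ | ξ g⁻¹ = true ∧ translate g ξ = ξ}) → U ∩ Omega X = ∅

/-- The periodic infinite word `γ^∞`. -/
noncomputable def perInf [Nonempty Λ] (γ : List Λ) : ℕ → Λ :=
  fun n => γ.getD (n % γ.length) (Classical.arbitrary Λ)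

/-- `n`-fold concatenation of a finite word with itself. -/
def rep : ℕ → List Λ → List Λ
  | 0, _ => []
  | n + 1, γ => γ ++ rep n γ

/-- `γ` is a circuit relative to `X`. -/
noncomputable def IsCircuit [Nonempty Λ] (X : Set (ℕ → Λ)) (γ : List Λ) : Prop :=
  γ ≠ [] ∧ perInf γ ∈ X

/-- `y` is an exit for the circuit `γ`. -/
noncomputable def IsExit [Nonempty Λ] (X : Set (ℕ → Λ)) (γ : List Λ) (y : ℕ → Λ) : Prop :=
  y ≠ perInf γ ∧ cat γ y ∈ X

/-- `z` is a strong exit for the circuit `γ`. -/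
noncomputable def IsStrongExit [Nonempty Λ] (X : Set (ℕ → Λ)) (γ : List Λ) (z : ℕ → Λ) : Prop :=
  z ≠ perInf γ ∧ ∀ n : ℕ, cat (rep n γ) z ∈ X

/-- The sets `X_g` of the standard partial action. -/
def Xg [DecidableEq Λ] (X : Set (ℕ → Λ)) (g : FreeGroup Λ) : Set (ℕ → Λ) :=
  {x | ∃ α β : List Λ, g = wd α * (wd β)⁻¹ ∧
        FreeGroup.norm g = α.length + β.length ∧
        ∃ y ∈ follower X α ∩ follower X β, x = cat α y}

/-- `x` is a fixed point for `θ_g`. -/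
def IsThetaFixed [DecidableEq Λ] (X : Set (ℕ → Λ)) (g : FreeGroup Λ) (x : ℕ → Λ) : Prop :=
  ∃ α β : List Λ, g = wd α * (wd β)⁻¹ ∧
    FreeGroup.norm g = α.length + β.length ∧
    ∃ y ∈ follower X α ∩ follower X β, x = cat β y ∧ cat α y = x

/-- `x` may be collectively reached from the finite set `B`. -/
def CollReached (X : Set (ℕ → Λ)) (B : Finset (List Λ)) (x : ℕ → Λ) : Prop :=
  ∃ α γ : List Λ, Pref α x ∧ ∀ β ∈ B, cat (β ++ γ) (tail x α.length) ∈ X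

/-- `X` is collectively cofinal. -/
def CollCofinal (X : Set (ℕ → Λ)) : Prop :=
  ∀ B : Finset (List Λ), ↑B ⊆ Language X → (⋂ β ∈ B, follower X β).Nonempty →
    ∀ x ∈ X, CollReached X B x

/-- `X` is strongly cofinal. -/
def StrongCofinal (X : Set (ℕ → Λ)) : Prop :=
  ∀ β ∈ Language X, ∃ M : ℕ, ∀ x ∈ X, ∃ α γ : List Λ, Pref α x ∧
    cat (β ++ γ) (tail x α.length) ∈ X ∧ α.length + γ.length ≤ M

/-- The even shift. -/
def evenShift : Set (ℕ → Fin 2) :=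
  ForbidSpace {w | ∃ n : ℕ, w = 0 :: (List.replicate (2 * n + 1) 1 ++ [0])}


-- basic cat lemmas
lemma cat_lt {α : List Λ} {v : ℕ → Λ} {n : ℕ} (h : n < α.length) : cat α v n = α[n] := by
  show α.getD n _ = _
  rw [List.getD_eq_getElem α _ h]

lemma cat_ge {α : List Λ} {v : ℕ → Λ} {n : ℕ} (h : α.length ≤ n) :
    cat α v n = v (n - α.length) := by
  simp [cat, List.getD]
  rw [List.getElem?_eq_none (by omega)]
  rfl

lemma length_rep (γ : List Λ) (m : ℕ) : (rep m γ).length = m * γ.length := by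
  induction m with
  | zero => simp [rep]
  | succ k ih => simp [rep, ih, Nat.succ_mul]; ring

lemma rep_add (γ : List Λ) (a b : ℕ) : rep (a + b) γ = rep a γ ++ rep b γ := by
  induction a with
  | zero => simp [rep]
  | succ k ih =>
      have : k + 1 + b = (k + b) + 1 := by omega
      rw [this]
      show γ ++ rep (k + b) γ = (γ ++ rep k γ) ++ rep b γ
      rw [ih, List.append_assoc]

lemma getD_rep {γ : List Λ} {m i : ℕ} (h : i < m * γ.length) (d : Λ) :
    (rep m γ).getD i d = γ.getD (i % γ.length) d := by
  induction m generalizing i with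
  | zero => omega
  | succ k ih =>
      show (γ ++ rep k γ).getD i d = _
      by_cases hi : i < γ.length
      · rw [List.getD_append _ _ _ _ hi, Nat.mod_eq_of_lt hi]
      · push_neg at hi
        rw [List.getD_append_right _ _ _ _ hi, ih (by rw [Nat.succ_mul] at h; omega)]
        congr 1
        conv_rhs => rw [show i = γ.length + (i - γ.length) by omega]
        rw [Nat.add_mod_left]

lemma getElem_rep {γ : List Λ} {m i : ℕ} (h : i < (rep m γ).length) (hγ : γ ≠ []) :
    (rep m γ)[i] = γ[i % γ.length]'(Nat.mod_lt _ (List.length_pos_iff.mpr hγ)) := by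
  have h' : i < m * γ.length := by rwa [length_rep] at h
  have := getD_rep (γ := γ) h' (γ[i % γ.length]'(Nat.mod_lt _ (List.length_pos_iff.mpr hγ)))
  rwa [List.getD_eq_getElem _ _ h, List.getD_eq_getElem _ _ (Nat.mod_lt _ (List.length_pos_iff.mpr hγ))] at this

lemma perInf_apply [Nonempty Λ] {γ : List Λ} (hγ : γ ≠ []) (k : ℕ) :
    perInf γ k = γ[k % γ.length]'(Nat.mod_lt _ (List.length_pos_iff.mpr hγ)) :=
  List.getD_eq_getElem _ _ _

lemma perInf_rep [Nonempty Λ] {γ : List Λ} (hγ : γ ≠ []) (n : ℕ) :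
    perInf (rep (n + 1) γ) = perInf γ := by
  have hL : 0 < γ.length := List.length_pos_iff.mpr hγ
  have hne : rep (n + 1) γ ≠ [] := by
    intro h
    have := length_rep γ (n + 1)
    rw [h] at this
    simp only [List.length_nil] at this
    nlinarith
  funext k
  rw [perInf_apply hne, perInf_apply hγ]
  rw [getElem_rep _ hγ]
  congr 1
  rw [length_rep]
  exact Nat.mod_mod_of_dvd k ⟨n + 1, by ring⟩

lemma cat_append (α β : List Λ) (v : ℕ → Λ) : cat (α ++ β) v = cat α (cat β v) := by
  funext n
  by_cases h1 : n < α.length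
  · rw [cat_lt (by simp; omega), cat_lt h1, List.getElem_append_left]
  · push_neg at h1
    by_cases h2 : n < α.length + β.length
    · rw [cat_lt (by simp; omega), cat_ge h1, cat_lt (by omega),
        List.getElem_append_right h1]
    · push_neg at h2
      rw [cat_ge (by simp; omega), cat_ge h1, cat_ge (by omega)]
      congr 1
      simp; omega

lemma tail_cat (α : List Λ) (v : ℕ → Λ) : tail (cat α v) α.length = v := by
  funext i
  show cat α v (α.length + i) = v i
  rw [cat_ge (by omega)]
  congr 1; omega

lemma tail_mem [TopologicalSpace Λ] {X : Set (ℕ → Λ)} (hX : IsSubshift X)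
    {x : ℕ → Λ} (hx : x ∈ X) (k : ℕ) : tail x k ∈ X := by
  induction k with
  | zero => convert hx using 1; funext i; show x (0 + i) = x i; rw [Nat.zero_add]
  | succ m ih =>
      have : tail x (m + 1) = shiftMap (tail x m) := by
        funext i; show x (m + 1 + i) = x (m + (i + 1)); congr 1; omega
      rw [this]; exact hX.2.2 _ ih

lemma drop_rep [TopologicalSpace Λ] {X : Set (ℕ → Λ)} (hX : IsSubshift X)
    {γ : List Λ} {v : ℕ → Λ} {m n : ℕ} (hmn : m ≤ n)
    (hv : cat (rep n γ) v ∈ X) : cat (rep m γ) v ∈ X := by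
  obtain ⟨k, rfl⟩ : ∃ k, n = k + m := ⟨n - m, by omega⟩
  rw [rep_add, cat_append] at hv
  have := tail_mem hX hv (rep k γ).length
  rwa [tail_cat] at this

lemma continuous_cat [TopologicalSpace Λ] (α : List Λ) :
    Continuous (fun v : ℕ → Λ => cat α v) := by
  apply continuous_pi
  intro n
  by_cases h : n < α.length
  · have : (fun v : ℕ → Λ => cat α v n) = fun _ => α[n] := funext fun v => cat_lt h
    rw [this]; exact continuous_const
  · have : (fun v : ℕ → Λ => cat α v n) = fun v => v (n - α.length) :=
      funext fun v => cat_ge (by omega)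
    rw [this]; exact continuous_apply _




/-- A circuit `γ` has an exit for each of its powers `γ^n` iff it has a
single common (strong) exit. -/
theorem circuit_exit_iff_strong_exit {Λ : Type} [Fintype Λ] [Nonempty Λ]
    [TopologicalSpace Λ] [DiscreteTopology Λ]
    (X : Set (ℕ → Λ)) (hX : IsSubshift X) (γ : List Λ) (hγ : IsCircuit X γ) :
    (∀ n : ℕ, ∃ y : ℕ → Λ, IsExit X (rep (n + 1) γ) y) ↔
      ∃ z : ℕ → Λ, IsStrongExit X γ z := by
  obtain ⟨hγne, -⟩ := hγ
  have hL : 0 < γ.length := List.length_pos_iff.mpr hγne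
  set p := perInf γ with hp
  constructor
  · intro h1
    -- key construction
    have key : ∀ n : ℕ, ∃ (r : ℕ) (v : ℕ → Λ), r < γ.length ∧ v r ≠ p r ∧
        cat (rep n γ) v ∈ X := by
      intro n
      obtain ⟨y, hy1, hy2⟩ := h1 n
      rw [perInf_rep hγne] at hy1
      have hm : ∃ m, y m ≠ p m := Function.ne_iff.mp hy1
      set m := Nat.find hm with hmdef
      have hym : y m ≠ p m := Nat.find_spec hm
      have hylt : ∀ i < m, y i = p i := fun i hi => by
        by_contra hc; exact Nat.find_min hm hi hc
      set x' : ℕ → Λ := cat (rep (n + 1) γ) y with hx'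
      have hx'X : x' ∈ X := hy2
      set t : ℕ := (n + 1) * γ.length + m with ht
      have hlenrep : (rep (n + 1) γ).length = (n + 1) * γ.length := length_rep γ (n + 1)
      -- x' agrees with p before t
      have hA : ∀ j < t, x' j = p j := by
        intro j hj
        by_cases hjl : j < (n + 1) * γ.length
        · rw [hx', cat_lt (by omega), getElem_rep (by omega) hγne, hp, perInf_apply hγne]
        · push_neg at hjl
          have : x' j = y (j - (n + 1) * γ.length) := by
            rw [hx', cat_ge (by omega)]; congr 1; omega
          rw [this, hylt _ (by omega)]
          rw [hp, perInf_apply hγne, perInf_apply hγne]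
          congr 1
          conv_rhs => rw [show j = (j - (n+1) * γ.length) + (n+1) * γ.length by omega]
          rw [Nat.add_mul_mod_self_right]
      have hB : x' t ≠ p t := by
        have hxt : x' t = y m := by
          rw [hx', cat_ge (by omega)]; congr 1; omega
        have hpt : p t = p m := by
          rw [hp, perInf_apply hγne, perInf_apply hγne]
          congr 1
          rw [ht, Nat.add_comm, Nat.add_mul_mod_self_right]
        rw [hxt, hpt]; exact hym
      set s : ℕ := t / γ.length with hs
      set r : ℕ := t % γ.length with hr
      have hrL : r < γ.length := Nat.mod_lt _ hL
      have hsn : n ≤ s := by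
        have : (n + 1) * γ.length ≤ t := by omega
        have := Nat.le_div_iff_mul_le hL |>.2 this
        omega
      have hts : s * γ.length + r = t := by
        rw [hs, hr, Nat.mul_comm]; exact Nat.div_add_mod t γ.length
      refine ⟨r, tail x' (s * γ.length), hrL, ?_, ?_⟩
      · have h1' : tail x' (s * γ.length) r = x' t := by
          show x' (s * γ.length + r) = x' t; rw [hts]
        have h2' : p t = p r := by
          rw [hp, perInf_apply hγne, perInf_apply hγne]
          congr 1
          rw [← hr, Nat.mod_mod_of_dvd _ dvd_rfl]
        rw [h1', ← h2']; exact hB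
      · have heq : cat (rep n γ) (tail x' (s * γ.length)) = tail x' ((s - n) * γ.length) := by
          funext j
          by_cases hj : j < n * γ.length
          · rw [cat_lt (by rw [length_rep]; omega), getElem_rep (by rw [length_rep] at *; omega) hγne]
            have hlt : (s - n) * γ.length + j < t := by
              rw [Nat.sub_mul] at *
              have h1'' : n * γ.length ≤ s * γ.length := Nat.mul_le_mul_right _ hsn
              omega
            show _ = x' ((s - n) * γ.length + j)
            rw [hA _ hlt, hp, perInf_apply hγne]
            congr 1
            rw [Nat.add_comm, Nat.add_mul_mod_self_right]
          · push_neg at hj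
            rw [cat_ge (by rw [length_rep]; omega)]
            show x' (s * γ.length + (j - (rep n γ).length)) = x' ((s - n) * γ.length + j)
            congr 1
            rw [length_rep, Nat.sub_mul]
            have h1'' : n * γ.length ≤ s * γ.length := Nat.mul_le_mul_right _ hsn
            omega
        rw [heq]
        exact tail_mem hX hx'X _
    choose rr vv hrr hvne hvX using key
    -- pigeonhole
    obtain ⟨⟨r₀, a₀⟩, hfib⟩ := Finite.exists_infinite_fiber
      (fun n => ((⟨rr n, hrr n⟩ : Fin γ.length), vv n (rr n)))
    have hfib' : {n | rr n = (r₀ : ℕ) ∧ vv n (rr n) = a₀}.Infinite := by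
      have := Set.infinite_coe_iff.mp hfib
      refine this.mono ?_
      intro n hn
      simp only [Set.mem_preimage, Set.mem_singleton_iff, Prod.mk.injEq] at hn
      exact ⟨by rw [← hn.1], hn.2⟩
    set K : ℕ → Set (ℕ → Λ) := fun m => {w | w r₀ = a₀ ∧ cat (rep m γ) w ∈ X} with hK
    have hKclosed : ∀ m, IsClosed (K m) := by
      intro m
      have : K m = (fun w : ℕ → Λ => w (r₀ : ℕ)) ⁻¹' {a₀} ∩
          (fun w => cat (rep m γ) w) ⁻¹' X := rfl
      rw [this]
      exact ((isClosed_singleton.preimage (continuous_apply _))).inter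
        (hX.2.1.preimage (continuous_cat _))
    have hKsub : ∀ i, K (i + 1) ⊆ K i := by
      intro i w hw
      exact ⟨hw.1, drop_rep hX (by omega) hw.2⟩
    have hKmono : ∀ i j, i ≤ j → K j ⊆ K i := by
      intro i j hij w hw
      exact ⟨hw.1, drop_rep hX hij hw.2⟩
    have hKne : ∀ m, (K m).Nonempty := by
      intro m
      obtain ⟨n, hnS, hnm⟩ := hfib'.exists_gt m
      exact ⟨vv n, hKmono m n (le_of_lt hnm) ⟨by rw [← hnS.1]; exact hnS.2, hvX n⟩⟩
    obtain ⟨z, hz⟩ := IsCompact.nonempty_iInter_of_sequence_nonempty_isCompact_isClosed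
      K hKsub hKne ((hKclosed 0).isCompact) hKclosed
    simp only [Set.mem_iInter] at hz
    -- a₀ ≠ p r₀
    obtain ⟨n₀, hn₀⟩ := hfib'.nonempty
    have ha₀ : a₀ ≠ p (r₀ : ℕ) := by
      rw [← hn₀.2, ← hn₀.1]
      exact hvne n₀
    refine ⟨z, ?_, fun m => (hz m).2⟩
    intro hzp
    exact ha₀ (by rw [← (hz 0).1, hzp])
  · rintro ⟨z, hz1, hz2⟩ n
    exact ⟨z, by rw [perInf_rep hγne]; exact hz1, hz2 (n + 1)⟩


end SubshiftPaper
end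

section
/- Let X be a subshift over a finite alphabet Λ. For every ξ ∈ Ω_X, letting x = σ(ξ) be its stem, one has ξ ⊆ ξ_x. -/
open scoped Classical

namespace SubshiftPaper

variable {Λ : Type}

section Aux

variable [DecidableEq Λ]

lemma wd_eq_mk (α : List Λ) : wd α = FreeGroup.mk (α.map (fun a => (a, true))) := by
  induction α with
  | nil => rfl
  | cons a l ih =>
    show FreeGroup.of a * wd l = _
    rw [ih]
    rw [show (FreeGroup.of a : FreeGroup Λ) = FreeGroup.mk [(a, true)] from rfl,
      FreeGroup.mul_mk]
    rfl

lemma red_eq_of_length {L₁ L₂ : List (Λ × Bool)} (h : FreeGroup.Red L₁ L₂)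
    (hl : L₁.length ≤ L₂.length) : L₁ = L₂ := by
  rcases Relation.ReflTransGen.cases_head h with heq | ⟨c, hstep, hred⟩
  · exact heq
  · have h1 := hstep.length
    have h2 := FreeGroup.Red.length_le hred
    omega

lemma reduce_pos (α : List Λ) :
    FreeGroup.reduce (α.map (fun a => (a, true))) = α.map (fun a => (a, true)) := by
  induction α with
  | nil => rfl
  | cons a l ih =>
    rw [List.map_cons, FreeGroup.reduce.cons, ih]
    cases l with
    | nil => rfl
    | cons b m => simp

lemma norm_wd (α : List Λ) : FreeGroup.norm (wd α) = α.length := by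
  have : FreeGroup.norm (wd α) = (FreeGroup.toWord (wd α)).length := rfl
  rw [this, wd_eq_mk, FreeGroup.toWord_mk, reduce_pos, List.length_map]

lemma toWord_decomp {g : FreeGroup Λ} {α β : List Λ}
    (h : g = wd α * (wd β)⁻¹) (hn : FreeGroup.norm g = α.length + β.length) :
    g.toWord = α.map (fun a => (a, true)) ++ FreeGroup.invRev (β.map (fun a => (a, true))) := by
  set W := α.map (fun a => (a, true)) ++ FreeGroup.invRev (β.map (fun a => (a, true))) with hW
  have hg : g = FreeGroup.mk W := by
    rw [h, wd_eq_mk, wd_eq_mk, FreeGroup.inv_mk, FreeGroup.mul_mk]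
  have h1 : g.toWord = FreeGroup.reduce W := by rw [hg, FreeGroup.toWord_mk]
  have hlen : W.length = α.length + β.length := by
    simp [hW, FreeGroup.invRev_length]
  have hnorm : FreeGroup.norm g = (FreeGroup.reduce W).length := by
    rw [show FreeGroup.norm g = g.toWord.length from rfl, h1]
  have : W = FreeGroup.reduce W :=
    red_eq_of_length FreeGroup.reduce.red (by omega)
  rw [h1, ← this]

lemma split_unique : ∀ (A : List (Λ × Bool)) {B A' B' : List (Λ × Bool)},
    A ++ B = A' ++ B' →
    (∀ p ∈ A, p.2 = true) → (∀ p ∈ B, p.2 = false) →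
    (∀ p ∈ A', p.2 = true) → (∀ p ∈ B', p.2 = false) → A = A' ∧ B = B' := by
  intro A
  induction A with
  | nil =>
    intro B A' B' h _ hB hA' hB'
    cases A' with
    | nil => simpa using h
    | cons p t =>
      exfalso
      have hp : p ∈ ([] : List (Λ × Bool)) ++ B := by rw [h]; simp
      have := hB p (by simpa using hp)
      have := hA' p (by simp)
      simp_all
  | cons a A ih =>
    intro B A' B' h hA hB hA' hB'
    cases A' with
    | nil =>
      exfalso
      have hp : a ∈ ([] : List (Λ × Bool)) ++ B' := by rw [← h]; simp
      have := hB' a (by simpa using hp)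
      have := hA a (by simp)
      simp_all
    | cons a' A'' =>
      simp only [List.cons_append, List.cons.injEq] at h
      obtain ⟨hq, hrest⟩ := h
      obtain ⟨h1, h2⟩ := ih hrest (fun p hp => hA p (by simp [hp])) hB
        (fun p hp => hA' p (by simp [hp])) hB'
      exact ⟨by rw [hq, h1], h2⟩

lemma decomp_unique {g : FreeGroup Λ} {α β α' β' : List Λ}
    (h : g = wd α * (wd β)⁻¹) (hn : FreeGroup.norm g = α.length + β.length)
    (h' : g = wd α' * (wd β')⁻¹) (hn' : FreeGroup.norm g = α'.length + β'.length) :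
    α = α' ∧ β = β' := by
  have h1 := toWord_decomp h hn
  have h2 := toWord_decomp h' hn'
  have heq := h1.symm.trans h2
  have memA : ∀ (l : List Λ), ∀ p ∈ l.map (fun a => (a, true)), (p : Λ × Bool).2 = true := by
    intro l p hp
    simp only [List.mem_map] at hp
    obtain ⟨a, _, rfl⟩ := hp; rfl
  have memB : ∀ (l : List Λ), ∀ p ∈ FreeGroup.invRev (l.map (fun a => (a, true))),
      (p : Λ × Bool).2 = false := by
    intro l p hp
    simp only [FreeGroup.invRev, List.mem_reverse, List.mem_map] at hp
    obtain ⟨q, hq, rfl⟩ := hp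
    obtain ⟨a, _, rfl⟩ := hq
    rfl
  obtain ⟨hA, hB⟩ := split_unique _ heq (memA α) (memB β) (memA α') (memB β')
  constructor
  · exact List.map_injective_iff.mpr (fun a b hab => by simpa using hab) hA
  · have := FreeGroup.invRev_injective hB
    exact List.map_injective_iff.mpr (fun a b hab => by simpa using hab) this

lemma mem_xiSet_of_xiB {X : Set (ℕ → Λ)} {x : ℕ → Λ} {g : FreeGroup Λ}
    (h : xiB X x g = true) : g ∈ xiSet X x := by
  by_cases hg : g ∈ xiSet X x
  · exact hg
  · simp [xiB, chi, hg] at h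

/-- Every element of the spectrum is approximated by `ξ_{x'}` agreeing on `g` and on a
long prefix of the stem. -/
lemma approx {Λ : Type} [Fintype Λ] [Nonempty Λ] [DecidableEq Λ]
    (X : Set (ℕ → Λ))
    (ξ : FreeGroup Λ → Bool) (hξ : ξ ∈ Omega X)
    (g : FreeGroup Λ) (hg : ξ g = true)
    (x : ℕ → Λ) (hx : IsStem ξ x) (M : ℕ) :
    ∃ x' ∈ X, g ∈ xiSet X x' ∧ ∀ i < M, x' i = x i := by
  set γ : List Λ := List.ofFn (fun i : Fin M => x i) with hγ
  have hγlen : γ.length = M := by simp [hγ]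
  have hγpref : Pref γ x := by
    intro i hi
    simp [hγ]
  have hξγ : ξ (wd γ) = true := by
    have hmem : wd γ ∈ {h : FreeGroup Λ | ∃ α : List Λ, h = wd α ∧ Pref α x} :=
      ⟨γ, rfl, hγpref⟩
    rw [← hx] at hmem
    exact hmem.1
  -- the open neighbourhood
  set U : Set (FreeGroup Λ → Bool) :=
    (fun η : FreeGroup Λ → Bool => η g) ⁻¹' {true} ∩
    (fun η : FreeGroup Λ → Bool => η (wd γ)) ⁻¹' {true} with hU
  have hUopen : IsOpen U :=
    IsOpen.inter ((continuous_apply g).isOpen_preimage _ (isOpen_discrete _))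
      ((continuous_apply (wd γ)).isOpen_preimage _ (isOpen_discrete _))
  have hξU : ξ ∈ U := ⟨hg, hξγ⟩
  obtain ⟨η, hηU, hηS⟩ := mem_closure_iff.mp hξ U hUopen hξU
  obtain ⟨x', hx'X, rfl⟩ := hηS
  refine ⟨x', hx'X, mem_xiSet_of_xiB hηU.1, ?_⟩
  -- from the second coordinate: `γ` is a prefix of `x'`
  have hγx' : wd γ ∈ xiSet X x' := mem_xiSet_of_xiB hηU.2
  obtain ⟨a, b, hab, habn, haPref, _⟩ := hγx'
  have htriv : wd γ = wd γ * (wd ([] : List Λ))⁻¹ := by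
    simp [wd]
  have htrivn : FreeGroup.norm (wd γ) = γ.length + ([] : List Λ).length := by
    simp [norm_wd]
  obtain ⟨ha, _⟩ := decomp_unique hab habn htriv htrivn
  intro i hi
  have := haPref i (by rw [ha, hγlen]; exact hi)
  rw [this]
  have : a[i]'(by rw [ha, hγlen]; exact hi) = γ[i]'(by rw [hγlen]; exact hi) := by
    congr 1
  rw [this]
  simp [hγ]

/-- Closedness under coordinatewise eventual limits. -/
lemma mem_of_eventually {Λ : Type} [TopologicalSpace Λ] [DiscreteTopology Λ]
    {X : Set (ℕ → Λ)} (hC : IsClosed X)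
    (f : ℕ → (ℕ → Λ)) (z : ℕ → Λ) (hf : ∀ M, f M ∈ X)
    (hev : ∀ n : ℕ, ∀ᶠ M in Filter.atTop, f M n = z n) : z ∈ X := by
  have htend : Filter.Tendsto f Filter.atTop (nhds z) := by
    rw [tendsto_pi_nhds]
    intro n
    have : nhds (z n) = pure (z n) := by
      rw [nhds_discrete]
    rw [this]
    exact Filter.tendsto_pure.mpr (hev n)
  exact hC.mem_of_tendsto htend (Filter.Eventually.of_forall hf)

end Aux

/-- every `ξ ∈ Ω_X` is contained in `ξ_x`, where `x = σ(ξ)` is its stem. -/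
theorem subset_xi_of_stem {Λ : Type} [Fintype Λ] [Nonempty Λ] [DecidableEq Λ]
    [TopologicalSpace Λ] [DiscreteTopology Λ]
    (X : Set (ℕ → Λ)) (hX : IsSubshift X)
    (ξ : FreeGroup Λ → Bool) (hξ : ξ ∈ Omega X)
    (x : ℕ → Λ) (hx : IsStem ξ x) :
    {g : FreeGroup Λ | ξ g = true} ⊆ xiSet X x := by
  intro g hg
  simp only [Set.mem_setOf_eq] at hg
  obtain ⟨_, hXclosed, _⟩ := hX
  -- choose approximants
  have happ : ∀ M : ℕ, ∃ x' ∈ X, g ∈ xiSet X x' ∧ ∀ i < M, x' i = x i :=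
    fun M => approx X ξ hξ g hg x hx M
  choose x' hx'X hx'xi hx'pref using happ
  -- baseline decomposition from M = 0
  obtain ⟨α, β, hαβ, hαβn, _, _⟩ := hx'xi 0
  -- each approximant uses the same pair (α, β)
  have hdata : ∀ M : ℕ, Pref α (x' M) ∧
      tail (x' M) α.length ∈ follower X α ∩ follower X β := by
    intro M
    obtain ⟨a, b, hab, habn, haPref, hafol⟩ := hx'xi M
    obtain ⟨ha, hb⟩ := decomp_unique hab habn hαβ hαβn
    subst ha; subst hb
    exact ⟨haPref, hafol⟩
  -- `α` is a prefix of `x`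
  have hprefα : Pref α x := by
    intro i hi
    have h1 := (hdata α.length).1 i hi
    have h2 := hx'pref α.length i hi
    rw [← h2, h1]
  refine ⟨α, β, hαβ, hαβn, hprefα, ?_⟩
  -- limit arguments
  set T : ℕ → Λ := tail x α.length with hT
  have hTX : T ∈ X := by
    refine mem_of_eventually hXclosed (fun M => tail (x' M) α.length) T
      (fun M => ((hdata M).2.1).1) ?_
    intro n
    filter_upwards [Filter.eventually_ge_atTop (α.length + n + 1)] with M hM
    exact hx'pref M (α.length + n) (by omega)
  have hcat : ∀ δ : List Λ, (∀ M, cat δ (tail (x' M) α.length) ∈ X) → cat δ T ∈ X := by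
    intro δ hδ
    refine mem_of_eventually hXclosed (fun M => cat δ (tail (x' M) α.length)) (cat δ T) hδ ?_
    intro n
    filter_upwards [Filter.eventually_ge_atTop (α.length + n + 1)] with M hM
    show (δ.getD n (tail (x' M) α.length (n - δ.length))) = δ.getD n (T (n - δ.length))
    by_cases hn : n < δ.length
    · rw [List.getD_eq_getElem δ _ hn, List.getD_eq_getElem δ _ hn]
    · rw [List.getD_eq_default δ _ (by omega), List.getD_eq_default δ _ (by omega)]
      show x' M (α.length + (n - δ.length)) = x (α.length + (n - δ.length))
      exact hx'pref M _ (by omega)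
  have hcatα : cat α T ∈ X := hcat α (fun M => ((hdata M).2.1).2)
  have hcatβ : cat β T ∈ X := hcat β (fun M => ((hdata M).2.2).2)
  exact ⟨⟨hTX, hcatα⟩, hTX, hcatβ⟩

end SubshiftPaper
end
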